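/- arXiv:1808.04192 — 2 statements merged into one kernel-verified Lean document; each statement's English description precedes it below -/
import Mathlib

section
/- Let n ≥ 1, m ∈ ℝ, let U ⊆ (ℝ²)ⁿ be open, and let ψ be a C¹ n-particle multi-time wave function on U whose components satisfy, for every k = 1,…,n and every spin index (s₁,…,sₙ) ∈ {−1,+1}ⁿ, the free multi-time Dirac equation with mass m in the representation γ⁰ = σ₁, γ¹ = σ₁σ₃: i(∂_{t_k} − s_k ∂_{z_k}) ψ_{s₁…sₙ} = m ψ_{s₁…s_{k−1},(−s_k),s_{k+1}…sₙ}. Then for every k and all fixed μ_j ∈ {0,1} (j ≠ k), the tensor current satisfies ∂_{t_k} j^{(μ₁,…,μ_{k−1},0,μ_{k+1},…,μₙ)} + ∂_{z_k} j^{(μ₁,…,μ_{k−1},1,μ_{k+1},…,μₙ)} = 0 on U. -/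
open scoped BigOperators
open MeasureTheory

noncomputable section

/-- spin value: `false` ↦ −1, `true` ↦ +1 -/
def sval (b : Bool) : ℝ := if b then 1 else -1

/-- ordered spacelike configurations 𝒮₁⁽ⁿ⁾ -/
def Sconf (n : ℕ) : Set (Fin n → ℝ × ℝ) :=
  {x | (∀ i j, i ≠ j → ((x i).1 - (x j).1) ^ 2 < ((x i).2 - (x j).2) ^ 2) ∧
       ∀ i j, i < j → (x i).2 < (x j).2}

/-- ordered spatial configurations Zₙ -/
def Zconf (n : ℕ) : Set (Fin n → ℝ) := {z | ∀ i j : Fin n, i < j → z i < z j}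

/-- partial derivative ∂_{t_k} (within the set `S`) -/
def dT {n : ℕ} {F : Type*} [NormedAddCommGroup F] [NormedSpace ℝ F]
    (S : Set (Fin n → ℝ × ℝ)) (f : (Fin n → ℝ × ℝ) → F) (k : Fin n)
    (x : Fin n → ℝ × ℝ) : F :=
  fderivWithin ℝ f S x (Pi.single k ((1 : ℝ), (0 : ℝ)))

/-- partial derivative ∂_{z_k} (within the set `S`) -/
def dZ {n : ℕ} {F : Type*} [NormedAddCommGroup F] [NormedSpace ℝ F]
    (S : Set (Fin n → ℝ × ℝ)) (f : (Fin n → ℝ × ℝ) → F) (k : Fin n)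
    (x : Fin n → ℝ × ℝ) : F :=
  fderivWithin ℝ f S x (Pi.single k ((0 : ℝ), (1 : ℝ)))

/-- partial derivative ∂_{z_k} for functions of spatial variables only -/
def dZr {n : ℕ} {F : Type*} [NormedAddCommGroup F] [NormedSpace ℝ F]
    (S : Set (Fin n → ℝ)) (f : (Fin n → ℝ) → F) (k : Fin n) (z : Fin n → ℝ) : F :=
  fderivWithin ℝ f S z (Pi.single k (1 : ℝ))

/-- C¹ functions on `S` that are bounded with bounded derivative -/
def C1bOn {E F : Type*} [NormedAddCommGroup E] [NormedSpace ℝ E]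
    [NormedAddCommGroup F] [NormedSpace ℝ F] (S : Set E) (f : E → F) : Prop :=
  ContDiffOn ℝ 1 f S ∧ (∃ C, ∀ x ∈ S, ‖f x‖ ≤ C) ∧ ∃ C, ∀ x ∈ S, ‖fderivWithin ℝ f S x‖ ≤ C

/-- the collision configuration (x₁,…,x_k,x_k,…,xₙ) -/
def double {n : ℕ} {α : Type*} (k : Fin n) (x : Fin n → α) : Fin (n + 1) → α :=
  Fin.insertNth k.castSucc (x k) x

/-- the index tuple (s₁,…,s_{k−1},a,b,s_{k+1},…,sₙ) -/
def pairIns {n : ℕ} {α : Type*} (k : Fin n) (s : Fin n → α) (a b : α) : Fin (n + 1) → α :=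
  Fin.insertNth k.castSucc a (Function.update s k b)

/-- the Dirac tensor current j^{μ₁…μₙ}; `μ i = true` means μᵢ = 1 -/
def current {n : ℕ} (ψ : (Fin n → ℝ × ℝ) → (Fin n → Bool) → ℂ) (μ : Fin n → Bool)
    (x : Fin n → ℝ × ℝ) : ℝ :=
  ∑ s : Fin n → Bool, Complex.normSq (ψ x s) * ∏ i, (if μ i then -(sval (s i)) else 1)

/-! Write `⟪z, w⟫ = Re (z̄ w)` and `s'` for `s` with its `k`-th spin flipped. By the Dirac
equation, `(∂_{t_k} − s_k ∂_{z_k}) |ψ_s|² = 2 ⟪ψ_s, (∂_{t_k} − s_k ∂_{z_k}) ψ_s⟫ = −2m ⟪ψ_s, i ψ_{s'}⟫`.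
Since setting `μ_k = 1` multiplies the weight of `|ψ_s|²` in the current by `−s_k`, the
divergence is `−2m ∑_s w(s) ⟪ψ_s, i ψ_{s'}⟫`, where the weight `w` for `μ_k = 0` does not see
`s_k`. As `⟪z, i w⟫ = −⟪w, i z⟫`, the summand is odd under `s ↔ s'`, so the sum vanishes. -/

open Function Complex

open scoped InnerProductSpace

def spinWeight {n : ℕ} (μ s : Fin n → Bool) : ℝ :=
  ∏ i, if μ i then -sval (s i) else 1

lemma spinWeight_update_true {n : ℕ} (μ s : Fin n → Bool) (k : Fin n) :
    spinWeight (update μ k true) s = -sval (s k) * spinWeight (update μ k false) s := by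
  simp only [spinWeight, ← Finset.mul_prod_erase _ _ (Finset.mem_univ k), update_self,
    if_true, Bool.false_eq_true, if_false, one_mul]
  congr 1
  refine Finset.prod_congr rfl fun i hi => ?_
  rw [update_of_ne (Finset.ne_of_mem_erase hi), update_of_ne (Finset.ne_of_mem_erase hi)]

lemma spinWeight_update_of_eq_false {n : ℕ} {μ : Fin n → Bool} {k : Fin n} (hμ : μ k = false)
    (s : Fin n → Bool) (b : Bool) : spinWeight μ (update s k b) = spinWeight μ s := by
  refine Finset.prod_congr rfl fun i _ => ?_
  rcases eq_or_ne i k with rfl | hik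
  · simp [hμ]
  · rw [update_of_ne hik]

lemma Fintype.sum_eq_zero_of_involutive_of_neg {ι R : Type*} [Fintype ι] [NonAssocRing R]
    [NoZeroDivisors R] [CharZero R] {σ : ι → ι} (hσ : Involutive σ) {g : ι → R}
    (hg : ∀ i, g (σ i) = -g i) : ∑ i, g i = 0 := by
  have h := Equiv.sum_comp hσ.toPerm g
  simp only [Involutive.coe_toPerm, hg, Finset.sum_neg_distrib] at h
  exact CharZero.eq_neg_self_iff.mp h.symm

lemma HasFDerivWithinAt.normSq {E : Type*} [NormedAddCommGroup E] [NormedSpace ℝ E]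
    {f : E → ℂ} {f' : E →L[ℝ] ℂ} {s : Set E} {x : E} (hf : HasFDerivWithinAt f f' s x) :
    HasFDerivWithinAt (fun y => normSq (f y)) (2 • (innerSL ℝ (f x)).comp f') s x := by
  simpa only [normSq_eq_norm_sq] using hf.norm_sq

lemma fderivWithin_current_apply {n : ℕ} {ψ : (Fin n → ℝ × ℝ) → (Fin n → Bool) → ℂ}
    {U : Set (Fin n → ℝ × ℝ)} {x : Fin n → ℝ × ℝ}
    (hψ : ∀ s, DifferentiableWithinAt ℝ (fun y => ψ y s) U x) (hU : UniqueDiffWithinAt ℝ U x)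
    (μ : Fin n → Bool) (v : Fin n → ℝ × ℝ) :
    fderivWithin ℝ (current ψ μ) U x v =
      ∑ s, spinWeight μ s * (2 * ⟪ψ x s, fderivWithin ℝ (fun y => ψ y s) U x v⟫_ℝ) := by
  have h : HasFDerivWithinAt (current ψ μ)
      (∑ s, spinWeight μ s • 2 • (innerSL ℝ (ψ x s)).comp (fderivWithin ℝ (fun y => ψ y s) U x))
      U x :=
    .fun_sum fun s _ => (hψ s).hasFDerivWithinAt.normSq.mul_const (spinWeight μ s)
  rw [h.fderivWithin hU]
  simp only [sum_apply, smul_apply, ContinuousLinearMap.comp_apply, innerSL_apply_apply,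
    smul_eq_mul, nsmul_eq_mul, Nat.cast_ofNat]

lemma Complex.real_inner_I_mul_eq_neg_swap (z w : ℂ) : ⟪z, I * w⟫_ℝ = -⟪w, I * z⟫_ℝ := by
  simp only [Complex.inner, mul_re, mul_im, conj_re, conj_im, I_re, I_im]
  ring

lemma Complex.real_inner_sub_eq_of_I_mul_eq {a b w : ℂ} {σ m : ℝ}
    (h : I * (a - σ * b) = m * w) (z : ℂ) :
    ⟪z, a⟫_ℝ - σ * ⟪z, b⟫_ℝ = -(m * ⟪z, I * w⟫_ℝ) := by
  have hab : a - σ • b = (-m) • (I * w) := by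
    simp only [real_smul, ofReal_neg]
    linear_combination -I * h + (a - σ * b) * I_sq
  calc ⟪z, a⟫_ℝ - σ * ⟪z, b⟫_ℝ = ⟪z, a - σ • b⟫_ℝ := by
        rw [inner_sub_right, real_inner_smul_right]
    _ = -(m * ⟪z, I * w⟫_ℝ) := by
        rw [hab, real_inner_smul_right, neg_mul]

theorem tensor_current_conservation_free_dirac_general
    (n : ℕ) (m : ℝ) (U : Set (Fin n → ℝ × ℝ)) (hU : IsOpen U)
    (ψ : (Fin n → ℝ × ℝ) → (Fin n → Bool) → ℂ)
    (hreg : ∀ s : Fin n → Bool, ContDiffOn ℝ 1 (fun x => ψ x s) U)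
    (heq : ∀ (k : Fin n) (s : Fin n → Bool), ∀ x ∈ U,
      Complex.I * (dT U (fun y => ψ y s) k x
          - (sval (s k) : ℂ) * dZ U (fun y => ψ y s) k x)
        = (m : ℂ) * ψ x (Function.update s k (!(s k)))) :
    ∀ (k : Fin n) (μ : Fin n → Bool), ∀ x ∈ U,
      dT U (current ψ (Function.update μ k false)) k x
        + dZ U (current ψ (Function.update μ k true)) k x = 0 := by
  intro k μ x hx
  have hψ : ∀ s, DifferentiableWithinAt ℝ (fun y => ψ y s) U x := fun s =>
    (hreg s).differentiableOn one_ne_zero x hx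
  set flipSpin : (Fin n → Bool) → (Fin n → Bool) := fun s => update s k (!s k)
  have hflipSpin : Involutive flipSpin := fun s => by simp [flipSpin]
  set g : (Fin n → Bool) → ℝ := fun s =>
    spinWeight (update μ k false) s * ⟪ψ x s, I * ψ x (flipSpin s)⟫_ℝ
  have hg : ∀ s, g (flipSpin s) = -g s := fun s => by
    simp only [g, hflipSpin s, real_inner_I_mul_eq_neg_swap (ψ x (flipSpin s)), mul_neg]
    congr 2
    exact spinWeight_update_of_eq_false (update_self k false μ) s _
  calc dT U (current ψ (update μ k false)) k x + dZ U (current ψ (update μ k true)) k x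
      = ∑ s, spinWeight (update μ k false) s *
          (2 * (⟪ψ x s, dT U (fun y => ψ y s) k x⟫_ℝ
            - sval (s k) * ⟪ψ x s, dZ U (fun y => ψ y s) k x⟫_ℝ)) := by
        simp only [dT, dZ, fderivWithin_current_apply hψ (hU.uniqueDiffWithinAt hx),
          spinWeight_update_true, ← Finset.sum_add_distrib]
        exact Finset.sum_congr rfl fun s _ => by ring
    _ = -(2 * m) * ∑ s, g s := by
        rw [Finset.mul_sum]
        exact Finset.sum_congr rfl fun s _ => by
          rw [real_inner_sub_eq_of_I_mul_eq (heq k s x hx)]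
          ring
    _ = 0 := by rw [Fintype.sum_eq_zero_of_involutive_of_neg hflipSpin hg, mul_zero]

/-- The free massive multi-time Dirac equations (in the representation
γ⁰ = σ₁, γ¹ = σ₁σ₃, where the mass term flips the k-th spin index) imply that each
tensor-current divergence in the k-th particle variable vanishes. -/
theorem tensor_current_conservation_free_dirac
    (n : ℕ) (hn : 1 ≤ n) (m : ℝ) (U : Set (Fin n → ℝ × ℝ)) (hU : IsOpen U)
    (ψ : (Fin n → ℝ × ℝ) → (Fin n → Bool) → ℂ)
    (hreg : ∀ s : Fin n → Bool, ContDiffOn ℝ 1 (fun x => ψ x s) U)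
    (heq : ∀ (k : Fin n) (s : Fin n → Bool), ∀ x ∈ U,
      Complex.I * (dT U (fun y => ψ y s) k x
          - (sval (s k) : ℂ) * dZ U (fun y => ψ y s) k x)
        = (m : ℂ) * ψ x (Function.update s k (!(s k)))) :
    ∀ (k : Fin n) (μ : Fin n → Bool), ∀ x ∈ U,
      dT U (current ψ (Function.update μ k false)) k x
        + dZ U (current ψ (Function.update μ k true)) k x = 0 :=
  tensor_current_conservation_free_dirac_general n m U hU ψ hreg heq
end
end

section
/- Let T > 0, γ > 0, θ ∈ ℝ, B ∈ ℂ^{1×2}. Let ψ¹, φ¹ ∈ C¹_b([−T,T]×ℝ, ℂ²), and suppose ψ², φ² ∈ C¹_b(D₂, ℂ⁴) both satisfy the free massless multi-time Dirac equations i(∂_{t_k} − s_k∂_{z_k})χ_{s₁s₂} = 0 (k = 1,2) on the interior of D₂, the interior-boundary conditions χ_{−+}(t,z,t,z) − e^{iθ}χ_{+−}(t,z,t,z) = Bψ¹(t,z) for χ = ψ² and = Bφ¹(t,z) for χ = φ², and have the same initial data: ψ²(0,z₁,0,z₂) = φ²(0,z₁,0,z₂) for all z₁ ≤ z₂. Then,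 with the weighted norms defined below, ‖ψ² − φ²‖_{2,γ} ≤ ‖B‖_∞ · ‖ψ¹ − φ¹‖_{1,γ}, where ‖B‖_∞ is the operator norm of B from (ℂ², max-norm) to ℂ. -/
/-!
Put `g = ψ² − φ²` and `h = ψ¹ − φ¹`. Every component `g_s` is constant along the
characteristics of its sector. Followed backwards, those of `++` and `−−`, and those of `+−`, `−+`
on one side of the collision light cone, reach the initial surface `t₁ = t₂ = 0`, where `g`
vanishes. The others hit the collision diagonal at `collisionPoint σ q`, where the
interior-boundary condition (whose other term vanishes by the same argument) gives
`g_{+−} = −e^{−iθ} B h` resp. `g_{−+} = B h` there. So near every interior point off the two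
light cones, `g = A ∘ h ∘ L` with `‖A v‖ ≤ ‖B‖_∞ ‖v‖` and `L` linear with coefficients `±1/2`;
since the collision time is at most `(|t₁| + |t₂|)/2` in absolute value, the weights are
compatible and the estimate follows pointwise there. Such points are dense in `D₂` and the
weighted quantity is continuous, which gives the estimate everywhere.
-/

open scoped BigOperators
open MeasureTheory

noncomputable section

/-- partial derivative ∂_t for a one-particle function (within `S`) -/
def pT {F : Type*} [NormedAddCommGroup F] [NormedSpace ℝ F]
    (S : Set (ℝ × ℝ)) (f : ℝ × ℝ → F) (x : ℝ × ℝ) : F :=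
  fderivWithin ℝ f S x ((1 : ℝ), (0 : ℝ))

/-- partial derivative ∂_z for a one-particle function (within `S`) -/
def pZ {F : Type*} [NormedAddCommGroup F] [NormedSpace ℝ F]
    (S : Set (ℝ × ℝ)) (f : ℝ × ℝ → F) (x : ℝ × ℝ) : F :=
  fderivWithin ℝ f S x ((0 : ℝ), (1 : ℝ))

/-- the ordered spacelike two-particle configurations 𝒮₁⁽²⁾;
a point is ((t₁,z₁),(t₂,z₂)) -/
def S2 : Set ((ℝ × ℝ) × (ℝ × ℝ)) :=
  {p | (p.1.1 - p.2.1) ^ 2 < (p.1.2 - p.2.2) ^ 2 ∧ p.1.2 < p.2.2}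

/-- the two-particle domain: closure of 𝒮₁⁽²⁾ with both times in [−T,T] -/
def D2 (T : ℝ) : Set ((ℝ × ℝ) × (ℝ × ℝ)) :=
  {p | p ∈ closure S2 ∧ p.1.1 ∈ Set.Icc (-T) T ∧ p.2.1 ∈ Set.Icc (-T) T}

/-- the interior two-particle domain: 𝒮₁⁽²⁾ with both times in [−T,T] -/
def S2T (T : ℝ) : Set ((ℝ × ℝ) × (ℝ × ℝ)) :=
  {p | p ∈ S2 ∧ p.1.1 ∈ Set.Icc (-T) T ∧ p.2.1 ∈ Set.Icc (-T) T}

/-- the one-particle domain [−T,T] × ℝ -/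
def strip (T : ℝ) : Set (ℝ × ℝ) := {p | p.1 ∈ Set.Icc (-T) T}

/-- coordinate directions in two-particle configuration space -/
def e1T : (ℝ × ℝ) × (ℝ × ℝ) := (((1 : ℝ), (0 : ℝ)), ((0 : ℝ), (0 : ℝ)))
def e1Z : (ℝ × ℝ) × (ℝ × ℝ) := (((0 : ℝ), (1 : ℝ)), ((0 : ℝ), (0 : ℝ)))
def e2T : (ℝ × ℝ) × (ℝ × ℝ) := (((0 : ℝ), (0 : ℝ)), ((1 : ℝ), (0 : ℝ)))
def e2Z : (ℝ × ℝ) × (ℝ × ℝ) := (((0 : ℝ), (0 : ℝ)), ((0 : ℝ), (1 : ℝ)))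

/-- the pointwise quantity (|h(p)| + max_y |∂_y h(p)|)·e^{−γ|t|} entering the weighted
one-particle norm; ℂ² = (Bool → ℂ) carries the max (= Pi sup) norm. -/
def wnorm1 (T γ : ℝ) (h : ℝ × ℝ → Bool → ℂ) (p : ℝ × ℝ) : ℝ :=
  (‖h p‖ + max ‖fderivWithin ℝ h (strip T) p ((1 : ℝ), (0 : ℝ))‖
      ‖fderivWithin ℝ h (strip T) p ((0 : ℝ), (1 : ℝ))‖) * Real.exp (-γ * |p.1|)

/-- the pointwise quantity (|g(p)| + max_y |∂_y g(p)|)·e^{−γ(|t₁|+|t₂|)/2} entering the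
weighted two-particle norm; ℂ⁴ = (Bool × Bool → ℂ) carries the max (= Pi sup) norm. -/
def wnorm2 (T γ : ℝ) (g : (ℝ × ℝ) × (ℝ × ℝ) → Bool × Bool → ℂ)
    (p : (ℝ × ℝ) × (ℝ × ℝ)) : ℝ :=
  (‖g p‖ + max (max ‖fderivWithin ℝ g (D2 T) p e1T‖ ‖fderivWithin ℝ g (D2 T) p e1Z‖)
      (max ‖fderivWithin ℝ g (D2 T) p e2T‖ ‖fderivWithin ℝ g (D2 T) p e2Z‖))
    * Real.exp (-γ * (|p.1.1| + |p.2.1|) / 2)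

open Filter Topology

abbrev X4 := (ℝ × ℝ) × (ℝ × ℝ)

lemma tendsto_add_smul_nhdsGT_zero {E : Type*} [NormedAddCommGroup E] [NormedSpace ℝ E]
    (p v : E) : Tendsto (fun ε : ℝ => p + ε • v) (𝓝[>] 0) (𝓝 p) :=
  ((continuous_const.add (continuous_id.smul continuous_const)).tendsto' 0 p
    (by simp)).mono_left nhdsWithin_le_nhds

lemma exists_pos_add_smul_mem_of_mem_interior {E : Type*} [NormedAddCommGroup E]
    [NormedSpace ℝ E] {s : Set E} {p : E} (hp : p ∈ interior s) (v : E) :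
    ∃ ε > (0 : ℝ), p + ε • v ∈ s := by
  obtain ⟨ε, hmem, hε⟩ := (((tendsto_add_smul_nhdsGT_zero p v).eventually_mem
    (mem_interior_iff_mem_nhds.1 hp)).and self_mem_nhdsWithin).exists
  exact ⟨ε, hε, hmem⟩

lemma mem_S2_iff {p : X4} :
    p ∈ S2 ↔ p.1.1 - p.2.1 < p.2.2 - p.1.2 ∧ p.2.1 - p.1.1 < p.2.2 - p.1.2 := by
  constructor
  · rintro ⟨h1, h2⟩
    constructor <;> nlinarith [sq_nonneg (p.1.1 - p.2.1 + (p.1.2 - p.2.2)),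
      sq_nonneg (p.1.1 - p.2.1 - (p.1.2 - p.2.2))]
  · rintro ⟨h1, h2⟩
    exact ⟨by nlinarith, by linarith⟩

lemma mem_closure_S2_iff {p : X4} :
    p ∈ closure S2 ↔ p.1.1 - p.2.1 ≤ p.2.2 - p.1.2 ∧ p.2.1 - p.1.1 ≤ p.2.2 - p.1.2 := by
  constructor
  · intro hp
    have hclosed : IsClosed {q : X4 | q.1.1 - q.2.1 ≤ q.2.2 - q.1.2 ∧
        q.2.1 - q.1.1 ≤ q.2.2 - q.1.2} :=
      (isClosed_le (by fun_prop) (by fun_prop)).and (isClosed_le (by fun_prop) (by fun_prop))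
    refine closure_minimal (fun q hq => ?_) hclosed hp
    exact (mem_S2_iff.1 hq).imp le_of_lt le_of_lt
  · rintro ⟨h1, h2⟩
    refine mem_closure_of_tendsto (tendsto_add_smul_nhdsGT_zero p e2Z)
      (eventually_nhdsWithin_of_forall fun ε (hε : 0 < ε) => ?_)
    rw [mem_S2_iff]
    simp only [e2Z, Prod.fst_add, Prod.snd_add, Prod.smul_fst, Prod.smul_snd,
      smul_eq_mul, mul_one]
    constructor <;> linarith

lemma mem_D2_iff {T : ℝ} {p : X4} :
    p ∈ D2 T ↔ (p.1.1 - p.2.1 ≤ p.2.2 - p.1.2 ∧ p.2.1 - p.1.1 ≤ p.2.2 - p.1.2) ∧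
      (-T ≤ p.1.1 ∧ p.1.1 ≤ T) ∧ (-T ≤ p.2.1 ∧ p.2.1 ≤ T) := by
  simp only [D2, Set.mem_ofPred_eq, mem_closure_S2_iff, Set.mem_Icc]

lemma mem_S2T_iff {T : ℝ} {p : X4} :
    p ∈ S2T T ↔ (p.1.1 - p.2.1 < p.2.2 - p.1.2 ∧ p.2.1 - p.1.1 < p.2.2 - p.1.2) ∧
      (-T ≤ p.1.1 ∧ p.1.1 ≤ T) ∧ (-T ≤ p.2.1 ∧ p.2.1 ≤ T) := by
  simp only [S2T, Set.mem_ofPred_eq, mem_S2_iff, Set.mem_Icc]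

lemma S2T_subset_D2 {T : ℝ} : S2T T ⊆ D2 T := fun _ hp =>
  ⟨subset_closure hp.1, hp.2⟩

lemma convex_D2 (T : ℝ) : Convex ℝ (D2 T) := by
  intro x hx y hy a b ha hb hab
  rw [mem_D2_iff] at hx hy ⊢
  simp only [Prod.fst_add, Prod.snd_add, Prod.smul_fst, Prod.smul_snd, smul_eq_mul]
  obtain ⟨⟨hx1, hx2⟩, ⟨hx3, hx4⟩, hx5, hx6⟩ := hx
  obtain ⟨⟨hy1, hy2⟩, ⟨hy3, hy4⟩, hy5, hy6⟩ := hy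
  refine ⟨⟨?_, ?_⟩, ⟨?_, ?_⟩, ?_, ?_⟩ <;> nlinarith

lemma add_smul_sub_mem_S2T {T : ℝ} {p q : X4} (hp : p ∈ S2T T) (hq : q ∈ D2 T) {s : ℝ}
    (hs : s ∈ Set.Ico (0 : ℝ) 1) : p + s • (q - p) ∈ S2T T := by
  rw [mem_S2T_iff] at hp ⊢
  rw [mem_D2_iff] at hq
  obtain ⟨hs0, hs1⟩ := hs
  simp only [Prod.fst_add, Prod.snd_add, Prod.smul_fst, Prod.smul_snd, Prod.fst_sub,
    Prod.snd_sub, smul_eq_mul]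
  obtain ⟨⟨hp1, hp2⟩, ⟨hp3, hp4⟩, hp5, hp6⟩ := hp
  obtain ⟨⟨hq1, hq2⟩, ⟨hq3, hq4⟩, hq5, hq6⟩ := hq
  refine ⟨⟨?_, ?_⟩, ⟨?_, ?_⟩, ?_, ?_⟩ <;> nlinarith

lemma of_mem_interior_D2 {T : ℝ} {p : X4} (hp : p ∈ interior (D2 T)) :
    (p.1.1 - p.2.1 < p.2.2 - p.1.2 ∧ p.2.1 - p.1.1 < p.2.2 - p.1.2) ∧
      (-T < p.1.1 ∧ p.1.1 < T) ∧ (-T < p.2.1 ∧ p.2.1 < T) := by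
  have shift := fun v => exists_pos_add_smul_mem_of_mem_interior hp v
  obtain ⟨ε₁, hε₁, h₁⟩ := shift (-e2Z)
  obtain ⟨ε₂, hε₂, h₂⟩ := shift e1T
  obtain ⟨ε₃, hε₃, h₃⟩ := shift (-e1T)
  obtain ⟨ε₄, hε₄, h₄⟩ := shift e2T
  obtain ⟨ε₅, hε₅, h₅⟩ := shift (-e2T)
  simp only [mem_D2_iff, e1T, e2T, e2Z, Prod.fst_add, Prod.snd_add, Prod.smul_fst,
    Prod.smul_snd, Prod.fst_neg, Prod.snd_neg, smul_eq_mul] at h₁ h₂ h₃ h₄ h₅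
  refine ⟨⟨?_, ?_⟩, ⟨?_, ?_⟩, ?_, ?_⟩ <;> linarith

lemma interior_D2_subset_S2T {T : ℝ} : interior (D2 T) ⊆ S2T T := fun _ hp => by
  obtain ⟨hS, h1, h2⟩ := of_mem_interior_D2 hp
  exact mem_S2T_iff.2 ⟨hS, h1.imp le_of_lt le_of_lt, h2.imp le_of_lt le_of_lt⟩

lemma interior_D2_nonempty {T : ℝ} (hT : 0 < T) : (interior (D2 T)).Nonempty := by
  let U : Set X4 := {q | (q.1.1 - q.2.1 < q.2.2 - q.1.2 ∧ q.2.1 - q.1.1 < q.2.2 - q.1.2) ∧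
    (-T < q.1.1 ∧ q.1.1 < T) ∧ (-T < q.2.1 ∧ q.2.1 < T)}
  have hU : IsOpen U := by apply_rules [IsOpen.and, isOpen_lt] <;> fun_prop
  have hUD : U ⊆ D2 T := fun q hq => mem_D2_iff.2 ⟨hq.1.imp le_of_lt le_of_lt,
    hq.2.1.imp le_of_lt le_of_lt, hq.2.2.imp le_of_lt le_of_lt⟩
  refine ⟨((0, 0), (0, 3 * T)), interior_maximal hUD hU ?_⟩
  simp only [U, Set.mem_ofPred_eq]
  refine ⟨⟨?_, ?_⟩, ⟨?_, ?_⟩, ?_, ?_⟩ <;> linarith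

lemma uniqueDiffOn_D2 {T : ℝ} (hT : 0 < T) : UniqueDiffOn ℝ (D2 T) :=
  uniqueDiffOn_convex (convex_D2 T) (interior_D2_nonempty hT)

lemma eq_of_fderivWithin_apply_eq_zero {E F : Type*} [NormedAddCommGroup E] [NormedSpace ℝ E]
    [NormedAddCommGroup F] [NormedSpace ℝ F] {D S : Set E} {f : E → F}
    (hf : DifferentiableOn ℝ f D) (hSD : S ⊆ D) {p v : E}
    (hseg : ∀ s ∈ Set.Ico (0 : ℝ) 1, p + s • v ∈ S) (hend : p + v ∈ D)
    (hv : ∀ x ∈ S, fderivWithin ℝ f D x v = 0) : f (p + v) = f p := by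
  have hmaps : Set.MapsTo (fun s : ℝ => p + s • v) (Set.Icc 0 1) D := fun s hs =>
    (eq_or_lt_of_le hs.2).elim (fun h => by simpa [h] using hend)
      (fun h => hSD (hseg s ⟨hs.1, h⟩))
  have hderiv : ∀ s ∈ Set.Icc (0 : ℝ) 1, HasDerivWithinAt (fun s : ℝ => f (p + s • v))
      (fderivWithin ℝ f D (p + s • v) v) (Set.Icc 0 1) s := fun s hs => by
    have hline : HasDerivWithinAt (fun s : ℝ => p + s • v) v (Set.Icc 0 1) s := by
      simpa using (((hasDerivAt_id s).smul_const v).const_add p).hasDerivWithinAt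
    exact (hf _ (hmaps hs)).hasFDerivWithinAt.comp_hasDerivWithinAt s hline hmaps
  have hconst := constant_of_derivWithin_zero (fun s hs => (hderiv s hs).differentiableWithinAt)
    (fun s hs => by
      rw [(hderiv s (Set.Ico_subset_Icc_self hs)).derivWithin
        (uniqueDiffOn_Icc_zero_one s (Set.Ico_subset_Icc_self hs)), hv _ (hseg s hs)])
    1 (Set.right_mem_Icc.2 zero_le_one)
  simpa using hconst

def SolvesFreeDirac (T : ℝ) (g : X4 → Bool × Bool → ℂ) : Prop :=
  ∀ su : Bool × Bool, ∀ p ∈ S2T T,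
    Complex.I * (fderivWithin ℝ (fun q => g q su) (D2 T) p e1T
        - (sval su.1 : ℂ) * fderivWithin ℝ (fun q => g q su) (D2 T) p e1Z) = 0
      ∧ Complex.I * (fderivWithin ℝ (fun q => g q su) (D2 T) p e2T
        - (sval su.2 : ℂ) * fderivWithin ℝ (fun q => g q su) (D2 T) p e2Z) = 0

lemma SolvesFreeDirac.sub {T : ℝ} (hT : 0 < T) {ψ φ : X4 → Bool × Bool → ℂ}
    (hψ : DifferentiableOn ℝ ψ (D2 T)) (hφ : DifferentiableOn ℝ φ (D2 T))
    (hψ' : SolvesFreeDirac T ψ) (hφ' : SolvesFreeDirac T φ) :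
    SolvesFreeDirac T (fun q su => ψ q su - φ q su) := by
  intro su p hp
  have hud := uniqueDiffOn_D2 hT p (S2T_subset_D2 hp)
  rw [fderivWithin_fun_sub hud (differentiableOn_pi.1 hψ su p (S2T_subset_D2 hp))
    (differentiableOn_pi.1 hφ su p (S2T_subset_D2 hp))]
  simp only [sub_apply]
  obtain ⟨hψ1, hψ2⟩ := hψ' su p hp
  obtain ⟨hφ1, hφ2⟩ := hφ' su p hp
  exact ⟨by linear_combination hψ1 - hφ1, by linear_combination hψ2 - hφ2⟩

lemma SolvesFreeDirac.apply_eq_of_char {T : ℝ} {g : X4 → Bool × Bool → ℂ}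
    (hg : DifferentiableOn ℝ g (D2 T))
    (hdirac : SolvesFreeDirac T g) (s : Bool × Bool) {q r : X4} (hq : q ∈ S2T T)
    (hr : r ∈ D2 T) (h₁ : r.1.2 - q.1.2 = -sval s.1 * (r.1.1 - q.1.1))
    (h₂ : r.2.2 - q.2.2 = -sval s.2 * (r.2.1 - q.2.1)) : g r s = g q s := by
  have hdir : r - q = (r.1.1 - q.1.1) • (e1T - sval s.1 • e1Z)
      + (r.2.1 - q.2.1) • (e2T - sval s.2 • e2Z) := by
    ext <;> simp [e1T, e1Z, e2T, e2Z] <;> linarith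
  have hchar : ∀ x ∈ S2T T, fderivWithin ℝ (fun q => g q s) (D2 T) x (r - q) = 0 := by
    intro x hx
    obtain ⟨h1, h2⟩ := hdirac s x hx
    have h1 := (mul_eq_zero.1 h1).resolve_left Complex.I_ne_zero
    have h2 := (mul_eq_zero.1 h2).resolve_left Complex.I_ne_zero
    simp only [hdir, map_add, map_smul, map_sub, Complex.real_smul, h1, h2, mul_zero, add_zero]
  simpa using eq_of_fderivWithin_apply_eq_zero (differentiableOn_pi.1 hg s) S2T_subset_D2
    (fun t ht => add_smul_sub_mem_S2T hq hr ht) (by simpa using hr) hchar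

/-- For `σ = 1` (sector `+−`) and `σ = −1` (sector `−+`): the point `(t, z)` where the two
characteristics through `q` of that sector meet on the diagonal `z₁ = z₂`. -/
def collisionPoint (σ : ℝ) : X4 →L[ℝ] ℝ × ℝ where
  toFun q := ((q.1.1 + q.2.1 + σ * (q.1.2 - q.2.2)) / 2, (q.1.2 + q.2.2 + σ * (q.1.1 - q.2.1)) / 2)
  map_add' p q := by ext <;> simp <;> ring
  map_smul' c q := by ext <;> simp <;> ring
  cont := by fun_prop

@[simp]
lemma collisionPoint_apply (σ : ℝ) (q : X4) : collisionPoint σ q =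
    ((q.1.1 + q.2.1 + σ * (q.1.2 - q.2.2)) / 2, (q.1.2 + q.2.2 + σ * (q.1.1 - q.2.1)) / 2) :=
  rfl

def SatisfiesIBC (T θ : ℝ) (g : X4 → Bool × Bool → ℂ) (f : ℝ × ℝ → ℂ) : Prop :=
  ∀ t ∈ Set.Icc (-T) T, ∀ z : ℝ,
    g ((t, z), (t, z)) (false, true)
        - Complex.exp (θ * Complex.I) * g ((t, z), (t, z)) (true, false) = f (t, z)

section Values

variable {T θ : ℝ} {g : X4 → Bool × Bool → ℂ} {f : ℝ × ℝ → ℂ} {q : X4}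
  (hg : DifferentiableOn ℝ g (D2 T)) (hdirac : SolvesFreeDirac T g)
  (hinit : ∀ z₁ z₂ : ℝ, z₁ ≤ z₂ → g ((0, z₁), (0, z₂)) = 0)
include hg hdirac hinit

lemma apply_eq_zero_of_initial (s : Bool × Bool) (hq : q ∈ S2T T)
    (hz : q.1.2 + sval s.1 * q.1.1 ≤ q.2.2 + sval s.2 * q.2.1) : g q s = 0 := by
  have hq' := mem_S2T_iff.1 hq
  rw [← hdirac.apply_eq_of_char hg s hq
    (r := ((0, q.1.2 + sval s.1 * q.1.1), (0, q.2.2 + sval s.2 * q.2.1)))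
    (mem_D2_iff.2 ⟨⟨by simpa using hz, by simpa using hz⟩, ⟨by linarith, by linarith⟩,
      ⟨by linarith, by linarith⟩⟩) (by simp) (by simp), hinit _ _ hz, Pi.zero_apply]

lemma apply_pm_eq (hibc : SatisfiesIBC T θ g f) (hq : q ∈ S2T T)
    (ht : 0 < (collisionPoint 1 q).1) :
    g q (true, false) = -(Complex.exp (θ * Complex.I))⁻¹ * f (collisionPoint 1 q) := by
  obtain ⟨⟨hz₁, hz₂⟩, ⟨ht₁, ht₁'⟩, ⟨ht₂, ht₂'⟩⟩ := mem_S2T_iff.1 hq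
  set τ := (collisionPoint 1 q).1 with hτ
  set ζ := (collisionPoint 1 q).2 with hζ
  simp only [collisionPoint_apply, one_mul] at hτ hζ ht
  have hdiag : ((τ, ζ), (τ, ζ)) ∈ D2 T :=
    mem_D2_iff.2 ⟨⟨by simp, by simp⟩, ⟨by linarith, by linarith⟩, ⟨by linarith, by linarith⟩⟩
  have hpm : g ((τ, ζ), (τ, ζ)) (true, false) = g q (true, false) :=
    hdirac.apply_eq_of_char hg _ hq hdiag (by simp [sval]; linarith) (by simp [sval]; linarith)
  -- the `−+` characteristic through the collision point starts at time `0`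
  have hmp : g ((τ, ζ), (τ, ζ)) (false, true) = 0 := by
    rw [hdirac.apply_eq_of_char hg _ (q := ((0, ζ - τ), (0, ζ + τ)))
      (mem_S2T_iff.2 ⟨⟨by simp; linarith, by simp; linarith⟩, ⟨by linarith, by linarith⟩,
        ⟨by linarith, by linarith⟩⟩) hdiag (by simp [sval]) (by simp [sval]),
      hinit _ _ (by linarith), Pi.zero_apply]
  have hibc' := hibc τ ⟨by linarith, by linarith⟩ ζ
  rw [hmp, hpm] at hibc'
  rw [← hibc']
  field_simp [Complex.exp_ne_zero]
  ring

lemma apply_mp_eq (hibc : SatisfiesIBC T θ g f) (hq : q ∈ S2T T)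
    (ht : (collisionPoint (-1) q).1 < 0) :
    g q (false, true) = f (collisionPoint (-1) q) := by
  obtain ⟨⟨hz₁, hz₂⟩, ⟨ht₁, ht₁'⟩, ⟨ht₂, ht₂'⟩⟩ := mem_S2T_iff.1 hq
  set τ := (collisionPoint (-1) q).1 with hτ
  set ζ := (collisionPoint (-1) q).2 with hζ
  simp only [collisionPoint_apply, neg_mul, one_mul] at hτ hζ ht
  have hdiag : ((τ, ζ), (τ, ζ)) ∈ D2 T :=
    mem_D2_iff.2 ⟨⟨by simp, by simp⟩, ⟨by linarith, by linarith⟩, ⟨by linarith, by linarith⟩⟩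
  have hmp : g ((τ, ζ), (τ, ζ)) (false, true) = g q (false, true) :=
    hdirac.apply_eq_of_char hg _ hq hdiag (by simp [sval]; linarith) (by simp [sval]; linarith)
  -- the `+−` characteristic through the collision point starts at time `0`
  have hpm : g ((τ, ζ), (τ, ζ)) (true, false) = 0 := by
    rw [hdirac.apply_eq_of_char hg _ (q := ((0, ζ + τ), (0, ζ - τ)))
      (mem_S2T_iff.2 ⟨⟨by simp; linarith, by simp; linarith⟩, ⟨by linarith, by linarith⟩,
        ⟨by linarith, by linarith⟩⟩) hdiag (by simp [sval]) (by simp [sval]),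
      hinit _ _ (by linarith), Pi.zero_apply]
  have hibc' := hibc τ ⟨by linarith, by linarith⟩ ζ
  rw [hmp, hpm, mul_zero, sub_zero] at hibc'
  exact hibc'

lemma eq_single_mp_of_collisionPoint_neg (hibc : SatisfiesIBC T θ g f) (hq : q ∈ S2T T)
    (ht : (collisionPoint (-1) q).1 < 0) :
    g q = Pi.single (false, true) (f (collisionPoint (-1) q)) := by
  have hq' := mem_S2T_iff.1 hq
  simp only [collisionPoint_apply] at ht
  ext ⟨_ | _, _ | _⟩
  · simpa using apply_eq_zero_of_initial hg hdirac hinit _ hq (by simp [sval]; linarith)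
  · simpa using apply_mp_eq hg hdirac hinit hibc hq (by simpa using ht)
  · simpa using apply_eq_zero_of_initial hg hdirac hinit _ hq (by simp [sval]; linarith)
  · simpa using apply_eq_zero_of_initial hg hdirac hinit _ hq (by simp [sval]; linarith)

lemma eq_zero_of_collisionPoint (hq : q ∈ S2T T) (ht₁ : (collisionPoint 1 q).1 ≤ 0)
    (ht₂ : 0 ≤ (collisionPoint (-1) q).1) : g q = 0 := by
  have hq' := mem_S2T_iff.1 hq
  simp only [collisionPoint_apply] at ht₁ ht₂
  ext ⟨_ | _, _ | _⟩ <;>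
    exact apply_eq_zero_of_initial hg hdirac hinit _ hq (by simp [sval]; linarith)

lemma eq_single_pm_of_collisionPoint_pos (hibc : SatisfiesIBC T θ g f) (hq : q ∈ S2T T)
    (ht : 0 < (collisionPoint 1 q).1) :
    g q = Pi.single (true, false)
      (-(Complex.exp (θ * Complex.I))⁻¹ * f (collisionPoint 1 q)) := by
  have hq' := mem_S2T_iff.1 hq
  simp only [collisionPoint_apply] at ht
  ext ⟨_ | _, _ | _⟩
  · simpa using apply_eq_zero_of_initial hg hdirac hinit _ hq (by simp [sval]; linarith)
  · simpa using apply_eq_zero_of_initial hg hdirac hinit _ hq (by simp [sval]; linarith)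
  · simpa using apply_pm_eq hg hdirac hinit hibc hq (by simpa using ht)
  · simpa using apply_eq_zero_of_initial hg hdirac hinit _ hq (by simp [sval]; linarith)

end Values

lemma norm_apply_le_max_of_norm_le_half {F : Type*} [NormedAddCommGroup F] [NormedSpace ℝ F]
    (D : ℝ × ℝ →L[ℝ] F) {v : ℝ × ℝ} (hv : ‖v‖ ≤ 1 / 2) :
    ‖D v‖ ≤ max ‖D (1, 0)‖ ‖D (0, 1)‖ := by
  have hv₁ : ‖v.1‖ ≤ 1 / 2 := (norm_fst_le v).trans hv
  have hv₂ : ‖v.2‖ ≤ 1 / 2 := (norm_snd_le v).trans hv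
  have hM₁ := le_max_left ‖D (1, 0)‖ ‖D (0, 1)‖
  have hM₂ := le_max_right ‖D (1, 0)‖ ‖D (0, 1)‖
  have hdecomp : v = v.1 • ((1 : ℝ), (0 : ℝ)) + v.2 • ((0 : ℝ), (1 : ℝ)) := by ext <;> simp
  have hDv : D v = v.1 • D (1, 0) + v.2 • D (0, 1) := by
    rw [← map_smul, ← map_smul, ← map_add, ← hdecomp]
  calc ‖D v‖ ≤ ‖v.1‖ * ‖D (1, 0)‖ + ‖v.2‖ * ‖D (0, 1)‖ := by
        rw [hDv, ← norm_smul, ← norm_smul]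
        exact norm_add_le _ _
    _ ≤ 1 / 2 * max ‖D (1, 0)‖ ‖D (0, 1)‖ + 1 / 2 * max ‖D (1, 0)‖ ‖D (0, 1)‖ := by
        gcongr
    _ = max ‖D (1, 0)‖ ‖D (0, 1)‖ := by ring

def rowFunctional (B : Bool → ℂ) : (Bool → ℂ) →L[ℝ] ℂ :=
  ∑ b, B b • ContinuousLinearMap.proj b

@[simp]
lemma rowFunctional_apply (B v : Bool → ℂ) : rowFunctional B v = ∑ b, B b * v b := by
  simp [rowFunctional]

lemma norm_rowFunctional_apply_le (B v : Bool → ℂ) :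
    ‖rowFunctional B v‖ ≤ (‖B false‖ + ‖B true‖) * ‖v‖ := by
  rw [rowFunctional_apply, Fintype.sum_bool, add_comm, add_mul]
  refine (norm_add_le _ _).trans (add_le_add ?_ ?_) <;>
    exact (norm_mul_le _ _).trans (by gcongr; exact norm_le_pi_norm v _)

lemma wnorm2_le_of_eventuallyEq {T γ C : ℝ} (hγ : 0 ≤ γ) {h : ℝ × ℝ → Bool → ℂ}
    (hh : DifferentiableOn ℝ h (strip T)) (hC : ∀ w ∈ strip T, wnorm1 T γ h w ≤ C)
    {g : X4 → Bool × Bool → ℂ} {p : X4}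
    (hp : p ∈ interior (D2 T)) (A : (Bool → ℂ) →L[ℝ] (Bool × Bool → ℂ)) {K : ℝ} (hK : 0 ≤ K)
    (hA : ∀ v, ‖A v‖ ≤ K * ‖v‖) (L : X4 →L[ℝ] ℝ × ℝ)
    (hL : ∀ e ∈ ({e1T, e1Z, e2T, e2Z} : Set X4), ‖L e‖ ≤ 1 / 2)
    (hLp : |(L p).1| ≤ (|p.1.1| + |p.2.1|) / 2) (hgp : g =ᶠ[𝓝 p] fun q => A (h (L q))) :
    wnorm2 T γ g p ≤ K * C := by
  obtain ⟨-, ht₁, ht₂⟩ := of_mem_interior_D2 hp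
  set w := L p
  have hw : |w.1| < T := hLp.trans_lt (by linarith [abs_lt.2 ht₁, abs_lt.2 ht₂])
  have hstrip : strip T ∈ 𝓝 w := continuous_fst.continuousAt.preimage_mem_nhds
    (Icc_mem_nhds (abs_lt.1 hw).1 (abs_lt.1 hw).2)
  set Dh := fderiv ℝ h w
  have hg' : HasFDerivAt g (A.comp (Dh.comp L)) p :=
    (A.hasFDerivAt.comp p (((hh.differentiableAt hstrip).hasFDerivAt).comp p
      L.hasFDerivAt)).congr_of_eventuallyEq hgp
  have hDg : fderivWithin ℝ g (D2 T) p = A.comp (Dh.comp L) := by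
    rw [fderivWithin_of_mem_nhds (mem_interior_iff_mem_nhds.1 hp), hg'.fderiv]
  set M := max ‖Dh (1, 0)‖ ‖Dh (0, 1)‖
  have hval : ‖g p‖ ≤ K * ‖h w‖ := by rw [hgp.eq_of_nhds]; exact hA _
  have hder : ∀ e ∈ ({e1T, e1Z, e2T, e2Z} : Set X4), ‖fderivWithin ℝ g (D2 T) p e‖ ≤ K * M :=
    fun e he => by
      rw [hDg]
      exact (hA _).trans (mul_le_mul_of_nonneg_left
        (norm_apply_le_max_of_norm_le_half Dh (hL e he)) hK)
  have hweight : Real.exp (-γ * (|p.1.1| + |p.2.1|) / 2) ≤ Real.exp (-γ * |w.1|) := by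
    rw [Real.exp_le_exp]
    nlinarith
  calc wnorm2 T γ g p ≤ (K * ‖h w‖ + K * M) * Real.exp (-γ * |w.1|) := by
        unfold wnorm2
        refine mul_le_mul (add_le_add hval (max_le (max_le ?_ ?_) (max_le ?_ ?_))) hweight
          (Real.exp_pos _).le (by positivity)
        all_goals exact hder _ (by simp)
    _ = K * wnorm1 T γ h w := by
        rw [wnorm1, fderivWithin_of_mem_nhds hstrip]
        ring
    _ ≤ K * C := mul_le_mul_of_nonneg_left (hC w (abs_le.1 hw.le)) hK

lemma norm_collisionPoint_le {σ : ℝ} (hσ : |σ| ≤ 1) :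
    ∀ e ∈ ({e1T, e1Z, e2T, e2Z} : Set X4), ‖collisionPoint σ e‖ ≤ 1 / 2 := by
  simp only [Set.mem_insert_iff, Set.mem_singleton_iff]
  rintro e (rfl | rfl | rfl | rfl) <;> simp [e1T, e1Z, e2T, e2Z, Prod.norm_def] <;> linarith

lemma norm_single_comp_apply {ι : Type*} [Fintype ι] [DecidableEq ι] {E : Type*}
    [NormedAddCommGroup E] [NormedSpace ℝ E] (i : ι) (ℓ : E →L[ℝ] ℂ) (v : E) :
    ‖(ContinuousLinearMap.single ℝ (fun _ : ι => ℂ) i).comp ℓ v‖ = ‖ℓ v‖ :=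
  Pi.norm_single _

lemma wnorm2_le_of_generic {T θ γ : ℝ} (hγ : 0 ≤ γ) (B : Bool → ℂ)
    {h : ℝ × ℝ → Bool → ℂ} (hh : DifferentiableOn ℝ h (strip T)) {C : ℝ}
    (hC : ∀ w ∈ strip T, wnorm1 T γ h w ≤ C) {g : X4 → Bool × Bool → ℂ}
    (hg : DifferentiableOn ℝ g (D2 T)) (hdirac : SolvesFreeDirac T g)
    (hinit : ∀ z₁ z₂ : ℝ, z₁ ≤ z₂ → g ((0, z₁), (0, z₂)) = 0)
    (hibc : SatisfiesIBC T θ g fun w => rowFunctional B (h w)) {p : X4}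
    (hp : p ∈ interior (D2 T)) (h₁ : (collisionPoint 1 p).1 ≠ 0)
    (h₂ : (collisionPoint (-1) p).1 ≠ 0) :
    wnorm2 T γ g p ≤ (‖B false‖ + ‖B true‖) * C := by
  set K := ‖B false‖ + ‖B true‖
  have hK : 0 ≤ K := by positivity
  obtain ⟨⟨hz₁, hz₂⟩, -⟩ := of_mem_interior_D2 hp
  have hS : ∀ᶠ q in 𝓝 p, q ∈ S2T T :=
    mem_of_superset (isOpen_interior.mem_nhds hp) fun _ hq => interior_D2_subset_S2T hq
  have hτ : ∀ σ : ℝ, Continuous fun q => (collisionPoint σ q).1 := fun σ =>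
    continuous_fst.comp (collisionPoint σ).continuous
  have habs := fun x : ℝ => (⟨neg_abs_le x, le_abs_self x⟩ : -|x| ≤ x ∧ x ≤ |x|)
  rcases h₂.lt_or_gt with hneg | hpos
  · refine wnorm2_le_of_eventuallyEq hγ hh hC hp
      ((ContinuousLinearMap.single ℝ _ (false, true)).comp (rowFunctional B)) hK
      (fun v => (norm_single_comp_apply _ _ v).trans_le (norm_rowFunctional_apply_le B v))
      (collisionPoint (-1)) (norm_collisionPoint_le (by simp)) ?_ ?_
    · simp only [collisionPoint_apply] at hneg ⊢
      exact abs_le.2 ⟨by linarith [habs p.1.1, habs p.2.1], by linarith [habs p.1.1, habs p.2.1]⟩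
    · filter_upwards [hS, (hτ (-1)).continuousAt.eventually_lt continuousAt_const hneg]
        with q hq hqτ
      rw [eq_single_mp_of_collisionPoint_neg hg hdirac hinit hibc hq hqτ]
      simp
  rcases h₁.lt_or_gt with hneg | hpos
  · refine wnorm2_le_of_eventuallyEq hγ hh hC hp 0 hK
      (fun v => by simp only [zero_apply, norm_zero]; positivity) 0 (by simp)
      (by simp; positivity) ?_
    filter_upwards [hS, (hτ 1).continuousAt.eventually_lt continuousAt_const hneg,
      continuousAt_const.eventually_lt (hτ (-1)).continuousAt hpos] with q hq hqτ hqτ'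
    rw [eq_zero_of_collisionPoint hg hdirac hinit hq hqτ.le hqτ'.le]
    simp
  · refine wnorm2_le_of_eventuallyEq hγ hh hC hp
      ((ContinuousLinearMap.single ℝ _ (true, false)).comp
        (-(Complex.exp (θ * Complex.I))⁻¹ • rowFunctional B)) hK
      (fun v => by
        rw [norm_single_comp_apply, smul_apply, norm_smul, norm_neg, norm_inv,
          Complex.norm_exp_ofReal_mul_I, inv_one, one_mul]
        exact norm_rowFunctional_apply_le B v)
      (collisionPoint 1) (norm_collisionPoint_le (by simp)) ?_ ?_
    · simp only [collisionPoint_apply] at hpos ⊢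
      exact abs_le.2 ⟨by linarith [habs p.1.1, habs p.2.1], by linarith [habs p.1.1, habs p.2.1]⟩
    · filter_upwards [hS, continuousAt_const.eventually_lt (hτ 1).continuousAt hpos]
        with q hq hqτ
      rw [eq_single_pm_of_collisionPoint_pos hg hdirac hinit hibc hq hqτ]
      simp

lemma dense_setOf_ne_zero {E : Type*} [NormedAddCommGroup E] [NormedSpace ℝ E]
    (f : E →L[ℝ] ℝ) (hf : f ≠ 0) : Dense {x | f x ≠ 0} := by
  have hker : interior ((LinearMap.ker (f : E →ₗ[ℝ] ℝ) : Submodule ℝ E) : Set E) = ∅ := by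
    by_contra hne
    refine hf (ContinuousLinearMap.ext fun x => ?_)
    have htop := Submodule.eq_top_of_nonempty_interior' _ (Set.nonempty_iff_ne_empty.2 hne)
    simpa using (htop.symm ▸ Submodule.mem_top : x ∈ LinearMap.ker (f : E →ₗ[ℝ] ℝ))
  exact interior_eq_empty_iff_dense_compl.1 hker

lemma D2_subset_closure_generic {T : ℝ} (hT : 0 < T) :
    D2 T ⊆ closure {q | q ∈ interior (D2 T) ∧ (collisionPoint 1 q).1 ≠ 0 ∧
      (collisionPoint (-1) q).1 ≠ 0} := by
  have hdense : ∀ σ : ℝ, Dense {q : X4 | (collisionPoint σ q).1 ≠ 0} := fun σ =>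
    dense_setOf_ne_zero ((ContinuousLinearMap.fst ℝ ℝ ℝ).comp (collisionPoint σ)) fun h => by
      simpa [e1T] using congr($h e1T)
  have hopen : IsOpen {q : X4 | (collisionPoint 1 q).1 ≠ 0} :=
    isOpen_ne_fun (by fun_prop) continuous_const
  have hgeneric : Dense {q : X4 | (collisionPoint 1 q).1 ≠ 0 ∧ (collisionPoint (-1) q).1 ≠ 0} :=
    (hdense 1).inter_of_isOpen_left (hdense (-1)) hopen
  calc D2 T ⊆ closure (interior (D2 T)) := by
        rw [(convex_D2 T).closure_interior_eq_closure_of_nonempty_interior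
          (interior_D2_nonempty hT)]
        exact subset_closure
    _ ⊆ closure (closure (interior (D2 T) ∩ {q : X4 | (collisionPoint 1 q).1 ≠ 0 ∧
          (collisionPoint (-1) q).1 ≠ 0})) :=
        closure_mono (hgeneric.open_subset_closure_inter isOpen_interior)
    _ = _ := closure_closure

lemma continuousOn_wnorm2 {T : ℝ} (hT : 0 < T) (γ : ℝ) {g : X4 → Bool × Bool → ℂ}
    (hg : ContDiffOn ℝ 1 g (D2 T)) : ContinuousOn (wnorm2 T γ g) (D2 T) := by
  have hD := hg.continuousOn_fderivWithin (uniqueDiffOn_D2 hT) le_rfl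
  have happ : ∀ e, ContinuousOn (fun p => ‖fderivWithin ℝ g (D2 T) p e‖) (D2 T) := fun e =>
    (hD.clm_apply continuousOn_const).norm
  exact (hg.continuousOn.norm.add (((happ _).sup (happ _)).sup ((happ _).sup (happ _)))).mul
    (by fun_prop)

/-- The weighted norms are expressed through upper bounds `C` of the pointwise quantities;
`‖B false‖ + ‖B true‖` is the operator norm of `B` from (ℂ², max-norm) to ℂ. -/
theorem two_particle_sector_contraction_estimate
    (T : ℝ) (hT : 0 < T) (γ : ℝ) (hγ : 0 < γ) (θ : ℝ) (B : Bool → ℂ)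
    (ψ1 φ1 : ℝ × ℝ → Bool → ℂ)
    (hψ1 : C1bOn (strip T) ψ1) (hφ1 : C1bOn (strip T) φ1)
    (ψ2 φ2 : (ℝ × ℝ) × (ℝ × ℝ) → Bool × Bool → ℂ)
    (hψ2 : C1bOn (D2 T) ψ2) (hφ2 : C1bOn (D2 T) φ2)
    -- both satisfy the free massless multi-time Dirac equations on the interior
    (heqψ : ∀ su : Bool × Bool, ∀ p ∈ S2T T,
      Complex.I * (fderivWithin ℝ (fun q => ψ2 q su) (D2 T) p e1T
          - (sval su.1 : ℂ) * fderivWithin ℝ (fun q => ψ2 q su) (D2 T) p e1Z) = 0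
        ∧ Complex.I * (fderivWithin ℝ (fun q => ψ2 q su) (D2 T) p e2T
          - (sval su.2 : ℂ) * fderivWithin ℝ (fun q => ψ2 q su) (D2 T) p e2Z) = 0)
    (heqφ : ∀ su : Bool × Bool, ∀ p ∈ S2T T,
      Complex.I * (fderivWithin ℝ (fun q => φ2 q su) (D2 T) p e1T
          - (sval su.1 : ℂ) * fderivWithin ℝ (fun q => φ2 q su) (D2 T) p e1Z) = 0
        ∧ Complex.I * (fderivWithin ℝ (fun q => φ2 q su) (D2 T) p e2T
          - (sval su.2 : ℂ) * fderivWithin ℝ (fun q => φ2 q su) (D2 T) p e2Z) = 0)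
    -- the interior-boundary conditions with boundary data Bψ¹ resp. Bφ¹
    (hibcψ : ∀ t ∈ Set.Icc (-T) T, ∀ z : ℝ,
      ψ2 ((t, z), (t, z)) (false, true)
          - Complex.exp (θ * Complex.I) * ψ2 ((t, z), (t, z)) (true, false)
        = ∑ b : Bool, B b * ψ1 (t, z) b)
    (hibcφ : ∀ t ∈ Set.Icc (-T) T, ∀ z : ℝ,
      φ2 ((t, z), (t, z)) (false, true)
          - Complex.exp (θ * Complex.I) * φ2 ((t, z), (t, z)) (true, false)
        = ∑ b : Bool, B b * φ1 (t, z) b)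
    -- same initial data
    (hinit : ∀ z₁ z₂ : ℝ, z₁ ≤ z₂ → ψ2 ((0, z₁), (0, z₂)) = φ2 ((0, z₁), (0, z₂))) :
    ∀ C : ℝ,
      (∀ p ∈ strip T, wnorm1 T γ (fun q b => ψ1 q b - φ1 q b) p ≤ C) →
      ∀ p ∈ D2 T, wnorm2 T γ (fun q su => ψ2 q su - φ2 q su) p
        ≤ (‖B false‖ + ‖B true‖) * C := by
  intro C hC p hp
  set g : X4 → Bool × Bool → ℂ := fun q su => ψ2 q su - φ2 q su
  set h : ℝ × ℝ → Bool → ℂ := fun q b => ψ1 q b - φ1 q b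
  have hg : ContDiffOn ℝ 1 g (D2 T) := hψ2.1.sub hφ2.1
  have hdirac : SolvesFreeDirac T g := SolvesFreeDirac.sub hT
    (hψ2.1.differentiableOn one_ne_zero) (hφ2.1.differentiableOn one_ne_zero) heqψ heqφ
  have hibc : SatisfiesIBC T θ g fun w => rowFunctional B (h w) := fun t ht z => by
    simp only [g, h, rowFunctional_apply, mul_sub, Finset.sum_sub_distrib]
    linear_combination hibcψ t ht z - hibcφ t ht z
  have hinit' : ∀ z₁ z₂ : ℝ, z₁ ≤ z₂ → g ((0, z₁), (0, z₂)) = 0 := fun z₁ z₂ hz => by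
    funext su
    exact sub_eq_zero.2 (congrFun (hinit z₁ z₂ hz) su)
  refine ((continuousOn_wnorm2 hT γ hg p hp).mono fun q hq => interior_subset hq.1).closure_le
    (D2_subset_closure_generic hT hp) continuousWithinAt_const ?_
  rintro q ⟨hq, h₁, h₂⟩
  exact wnorm2_le_of_generic hγ.le B ((hψ1.1.sub hφ1.1).differentiableOn one_ne_zero) hC
    (hg.differentiableOn one_ne_zero) hdirac hinit' hibc hq h₁ h₂
end
end
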